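/- arXiv:1904.08882 — 3 statements merged into one kernel-verified Lean document; each statement's English description precedes it below -/
import Mathlib

section
/- Let p be a prime and 0 < b < 1. Let {Y^k_j : k ∈ ℕ₀, 0 ≤ j ≤ p^{k+1}−1} be mutually independent real random variables, all with the same law μ, where μ is not a point mass and where E|Y − Y'|^q < ∞ for some q > 0 for independent Y, Y' with law μ. Extend each row periodically by setting Y^k_n := Y^k_{n mod p^{k+1}} for all n ∈ ℕ₀. Then: (i) for every n ∈ ℕ₀ the series Σ_{k=0}^∞ b^k·(Y^k_n − Y^k_0) converges almost surely; and (ii) the process X = (X_n)_{n∈ℕ₀} defined by X_n = Σ_{k=0}^∞ b^k·(Y^k_n − Y^k_0) is a dt-ss-si process with scaling function n ↦ (|n|_p)^H, where H = −log_p(b). -/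
/-!
Everything is read off the law of the array `y = (Y^k_j)`, which is the product measure
`μ^I` on `I = {(k, j) | j < p^(k+1)}` and is therefore invariant under `y ↦ y ∘ σ` for every
injective `σ : I → I`.

Convergence: with `r = min q 1`, each `E|b^k (Y^k_n - Y^k_0)|^r` is at most
`b^{rk} E|Y - Y'|^r`, so `∑_k |b^k (Y^k_n - Y^k_0)|^r` has finite expectation and is finite
a.s.; since `r ≤ 1`, this forces absolute convergence of the series.

Self-similarity: write `n = p^v u` with `p ∤ u`. The first `v` terms of the series for
`X_{nm}` vanish, and the remaining ones are `b^v` times the series for `X_m` evaluated at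
`y ∘ σ`, where `σ (k, j) = (k + v, p^v u j mod p^(k+v+1))` is injective because `u` is a unit
mod `p^(k+1)`. Hence `(X_{nm})_m ≐ b^v (X_m)_m`, and `b^v = |n|_p^H`.

Stationary increments: translating every row by `a` turns the increments at `m + a` into the
increments at `m`, up to the same additive constant `X_a`.
-/

open MeasureTheory ProbabilityTheory Filter

noncomputable section

/-- The `p`-adic norm of a natural number, as a real number (`0` for `n = 0`). -/
def padicNormNat (p n : ℕ) : ℝ := ((padicNorm p (n : ℚ) : ℚ) : ℝ)

/-- Equality in distribution of two families of random variables: the laws of the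
induced maps into the product space coincide. -/
def EqDistFam {ι Ω₁ Ω₂ E : Type*} [MeasurableSpace Ω₁] [MeasurableSpace Ω₂]
    [MeasurableSpace E]
    (P₁ : Measure Ω₁) (P₂ : Measure Ω₂) (X : ι → Ω₁ → E) (Y : ι → Ω₂ → E) : Prop :=
  Measure.map (fun ω i => X i ω) P₁ = Measure.map (fun ω i => Y i ω) P₂

/-- A discrete-time process is self-similar with scaling function `b` if for every `n ≥ 1`,
`(X (n*m))ₘ ≐ (b n • X m)ₘ`. -/
def SelfSimilar {Ω : Type*} [MeasurableSpace Ω] (P : Measure Ω) (X : ℕ → Ω → ℝ)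
    (b : ℕ → ℝ) : Prop :=
  ∀ n : ℕ, 1 ≤ n → EqDistFam P P (fun m ω => X (n * m) ω) (fun m ω => b n * X m ω)

/-- A discrete-time process has stationary increments if for every `k ≥ 1`,
`(X (m+1) - X m)ₘ ≐ (X (m+k+1) - X (m+k))ₘ`. -/
def StationaryIncrements {Ω : Type*} [MeasurableSpace Ω] (P : Measure Ω)
    (X : ℕ → Ω → ℝ) : Prop :=
  ∀ k : ℕ, 1 ≤ k → EqDistFam P P (fun m ω => X (m + 1) ω - X m ω)
    (fun m ω => X (m + k + 1) ω - X (m + k) ω)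

open scoped ENNReal

theorem summable_of_summable_abs_rpow {a : ℕ → ℝ} {r : ℝ} (hr0 : 0 < r) (hr1 : r ≤ 1)
    (h : Summable fun k => |a k| ^ r) : Summable a := by
  refine Summable.of_norm_bounded_eventually_nat h ?_
  filter_upwards [h.tendsto_atTop_zero.eventually_le_const one_pos] with k hk
  have hk' : |a k| ≤ 1 := le_of_not_gt fun h1 => hk.not_gt (Real.one_lt_rpow h1 hr0)
  exact Real.self_le_rpow_of_le_one (abs_nonneg _) hk' hr1

theorem ae_summable_of_tsum_lintegral_rpow_ne_top {α : Type*} [MeasurableSpace α]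
    {μ : Measure α} {f : ℕ → α → ℝ} (hf : ∀ k, AEMeasurable (f k) μ) {r : ℝ} (hr0 : 0 < r)
    (hr1 : r ≤ 1) (h : ∑' k, ∫⁻ x, ENNReal.ofReal (|f k x| ^ r) ∂μ ≠ ∞) :
    ∀ᵐ x ∂μ, Summable fun k => f k x := by
  have hmeas : ∀ k, AEMeasurable (fun x => ENNReal.ofReal (|f k x| ^ r)) μ := fun k =>
    ((hf k).abs.pow_const r).ennreal_ofReal
  have hfin : ∀ᵐ x ∂μ, ∑' k, ENNReal.ofReal (|f k x| ^ r) < ∞ :=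
    ae_lt_top' (AEMeasurable.tsum hmeas) (by rwa [lintegral_tsum hmeas])
  filter_upwards [hfin] with x hx
  refine summable_of_summable_abs_rpow hr0 hr1 ((ENNReal.summable_toReal hx.ne).congr fun k => ?_)
  exact ENNReal.toReal_ofReal (by positivity)

theorem tsum_eq_tsum_nat_add_of_eq_zero {G : Type*} [AddCommGroup G] [TopologicalSpace G]
    [IsTopologicalAddGroup G] [T2Space G] {f : ℕ → G} (k : ℕ) (hf : ∀ i < k, f i = 0) :
    ∑' i, f i = ∑' i, f (i + k) := by
  by_cases hs : Summable f
  · rw [← hs.sum_add_tsum_nat_add k, Finset.sum_eq_zero fun i hi => hf i (Finset.mem_range.1 hi),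
      zero_add]
  · rw [tsum_eq_zero_of_not_summable hs,
      tsum_eq_zero_of_not_summable (mt (summable_nat_add_iff k).1 hs)]

theorem padicNormNat_rpow_neg_logb {p : ℕ} (hp : p.Prime) {b : ℝ} (hb : 0 < b) {n : ℕ}
    (hn : n ≠ 0) : padicNormNat p n ^ (-Real.logb p b) = b ^ padicValNat p n := by
  have hp1 : (1 : ℝ) < p := by exact_mod_cast hp.one_lt
  have hnorm : padicNormNat p n = (p : ℝ) ^ (-(padicValNat p n : ℤ)) := by
    rw [padicNormNat, padicNorm.eq_zpow_of_nonzero (by exact_mod_cast hn), padicValRat.of_nat]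
    push_cast
    rfl
  rw [hnorm, ← Real.rpow_intCast, ← Real.rpow_mul (by positivity), Int.cast_neg, Int.cast_natCast,
    neg_mul_neg, mul_comm, Real.rpow_mul (by positivity), Real.rpow_logb (by positivity) hp1.ne' hb,
    Real.rpow_natCast]

theorem map_eq_map_of_ae_eq_comp {α β : Type*} [MeasurableSpace α] [MeasurableSpace β]
    {ν : Measure α} {T : α → α} (hT : MeasurePreserving T ν ν) {F G : α → β}
    (hG : Measurable G) (h : F =ᵐ[ν] G ∘ T) : ν.map F = ν.map G := by
  rw [Measure.map_congr h, ← Measure.map_map hG hT.measurable, hT.map_eq]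

theorem EqDistFam.comp_of_map {ι Ω Ω' E : Type*} [MeasurableSpace Ω] [MeasurableSpace Ω']
    [MeasurableSpace E] {P : Measure Ω} {Φ : Ω → Ω'} (hΦ : Measurable Φ) {X Y : ι → Ω' → E}
    (hX : ∀ i, Measurable (X i)) (hY : ∀ i, Measurable (Y i))
    (h : EqDistFam (P.map Φ) (P.map Φ) X Y) :
    EqDistFam P P (fun i ω => X i (Φ ω)) (fun i ω => Y i (Φ ω)) := by
  unfold EqDistFam at h ⊢
  rwa [Measure.map_map (measurable_pi_lambda _ hX) hΦ,
    Measure.map_map (measurable_pi_lambda _ hY) hΦ] at h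

theorem SelfSimilar.comp_of_map {Ω Ω' : Type*} [MeasurableSpace Ω] [MeasurableSpace Ω']
    {P : Measure Ω} {Φ : Ω → Ω'} (hΦ : Measurable Φ) {X : ℕ → Ω' → ℝ}
    (hX : ∀ n, Measurable (X n)) {c : ℕ → ℝ} (h : SelfSimilar (P.map Φ) X c) :
    SelfSimilar P (fun n ω => X n (Φ ω)) c := fun n hn =>
  (h n hn).comp_of_map hΦ (fun _ => hX _) fun m => (hX m).const_mul _

theorem StationaryIncrements.comp_of_map {Ω Ω' : Type*} [MeasurableSpace Ω]
    [MeasurableSpace Ω'] {P : Measure Ω} {Φ : Ω → Ω'} (hΦ : Measurable Φ) {X : ℕ → Ω' → ℝ}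
    (hX : ∀ n, Measurable (X n)) (h : StationaryIncrements (P.map Φ) X) :
    StationaryIncrements P (fun n ω => X n (Φ ω)) := fun k hk =>
  (h k hk).comp_of_map hΦ (fun _ => (hX _).sub (hX _)) fun _ => (hX _).sub (hX _)

theorem measurePreserving_comp_infinitePi {ι E : Type*} [MeasurableSpace E] (μ : Measure E)
    [IsProbabilityMeasure μ] {σ : ι → ι} (hσ : Function.Injective σ) :
    MeasurePreserving (fun y : ι → E => y ∘ σ) (Measure.infinitePi fun _ => μ)
      (Measure.infinitePi fun _ => μ) :=
  ⟨by fun_prop, Measure.map_infinitePi_infinitePi_of_inj hσ⟩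

theorem lintegral_rpow_abs_sub_infinitePi_le {ι : Type*} (μ : Measure ℝ) [IsProbabilityMeasure μ]
    {r : ℝ} (hr : 0 < r) (i j : ι) :
    ∫⁻ y, ENNReal.ofReal (|y i - y j| ^ r) ∂(Measure.infinitePi fun _ : ι => μ) ≤
      ∫⁻ x, ENNReal.ofReal (|x.1 - x.2| ^ r) ∂(μ.prod μ) := by
  rcases eq_or_ne i j with rfl | hij
  · simp [Real.zero_rpow hr.ne']
  · rw [← Measure.infinitePi_map_eval_prod (P := fun _ => μ) hij,
      lintegral_map (by fun_prop) (by fun_prop)]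

abbrev ArrayIndex (p : ℕ) : Type := {q : ℕ × ℕ // q.2 < p ^ (q.1 + 1)}

namespace ArrayIndex

variable {p : ℕ} [NeZero p]

-- Position of `Y^k_n` once row `k` is extended `p^(k+1)`-periodically.
def cell (p : ℕ) [NeZero p] (k n : ℕ) : ArrayIndex p :=
  ⟨(k, n % p ^ (k + 1)), Nat.mod_lt _ (pow_pos (Nat.pos_of_neZero p) _)⟩

theorem cell_eq_cell_iff {k k' n n' : ℕ} :
    cell p k n = cell p k' n' ↔ k = k' ∧ n ≡ n' [MOD p ^ (k + 1)] := by
  constructor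
  · intro h
    obtain ⟨rfl, hn⟩ := Prod.ext_iff.1 (Subtype.ext_iff.1 h)
    exact ⟨rfl, hn⟩
  · rintro ⟨rfl, hn⟩
    exact Subtype.ext (Prod.ext rfl hn)

theorem cell_self (i : ArrayIndex p) : cell p i.1.1 i.1.2 = i :=
  Subtype.ext (Prod.ext rfl (Nat.mod_eq_of_lt i.2))

theorem eq_of_cell_eq {i i' : ArrayIndex p} (h : cell p i.1.1 i.1.2 = cell p i'.1.1 i'.1.2) :
    i = i' := by
  rwa [cell_self, cell_self] at h

def shift (a : ℕ) (i : ArrayIndex p) : ArrayIndex p := cell p i.1.1 (i.1.2 + a)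

theorem shift_cell (a k n : ℕ) : shift a (cell p k n) = cell p k (n + a) :=
  cell_eq_cell_iff.2 ⟨rfl, (Nat.mod_modEq n _).add_right a⟩

theorem shift_injective (a : ℕ) : Function.Injective (shift (p := p) a) := by
  intro i i' h
  obtain ⟨hk, hn⟩ := cell_eq_cell_iff.1 h
  exact eq_of_cell_eq (cell_eq_cell_iff.2 ⟨hk, Nat.ModEq.add_right_cancel' a hn⟩)

def dilate (v u : ℕ) (i : ArrayIndex p) : ArrayIndex p := cell p (i.1.1 + v) (p ^ v * u * i.1.2)

theorem dilate_cell (v u k n : ℕ) : dilate v u (cell p k n) = cell p (k + v) (p ^ v * u * n) := by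
  show cell p (k + v) (p ^ v * u * (n % p ^ (k + 1))) = _
  refine cell_eq_cell_iff.2 ⟨rfl, ?_⟩
  rw [show k + v + 1 = v + (k + 1) by ring, pow_add, mul_assoc, mul_assoc]
  exact ((Nat.mod_modEq n _).mul_left u).mul_left' _

theorem dilate_injective {v u : ℕ} (hu : Nat.Coprime p u) :
    Function.Injective (dilate (p := p) v u) := by
  intro i i' h
  obtain ⟨hk, hn⟩ := cell_eq_cell_iff.1 h
  rw [show i.1.1 + v + 1 = v + (i.1.1 + 1) by ring, pow_add, mul_assoc, mul_assoc] at hn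
  refine eq_of_cell_eq (cell_eq_cell_iff.2 ⟨by omega, ?_⟩)
  exact (hn.mul_left_cancel' (pow_ne_zero _ (NeZero.ne p))).cancel_left_of_coprime
    (Nat.Coprime.pow_left _ hu)

theorem cell_pow_mul_of_lt {v k : ℕ} (hk : k < v) (m : ℕ) : cell p k (p ^ v * m) = cell p k 0 :=
  cell_eq_cell_iff.2 ⟨rfl, Nat.modEq_zero_iff_dvd.2 (Dvd.dvd.mul_right (pow_dvd_pow p hk) m)⟩

end ArrayIndex

open ArrayIndex

def arrayTerm (p : ℕ) [NeZero p] (b : ℝ) (n : ℕ) (y : ArrayIndex p → ℝ) (k : ℕ) : ℝ :=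
  b ^ k * (y (cell p k n) - y (cell p k 0))

-- `∑'` is `0` on a divergent series, so this is the limit of the partial sums only where
-- `arrayTerm p b n y` is summable.
def arraySeries (p : ℕ) [NeZero p] (b : ℝ) (n : ℕ) (y : ArrayIndex p → ℝ) : ℝ :=
  ∑' k, arrayTerm p b n y k

section ArraySeries

variable {p : ℕ} [NeZero p] {b : ℝ}

theorem measurable_arrayTerm (n k : ℕ) : Measurable fun y => arrayTerm p b n y k := by
  unfold arrayTerm
  fun_prop

theorem measurable_arraySeries (n : ℕ) : Measurable (arraySeries p b n) :=
  Measurable.tsum fun k => measurable_arrayTerm n k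

theorem arraySeries_pow_mul (v u m : ℕ) (y : ArrayIndex p → ℝ) :
    arraySeries p b (p ^ v * u * m) y = b ^ v * arraySeries p b m (y ∘ dilate v u) := by
  have hlow : ∀ k < v, arrayTerm p b (p ^ v * u * m) y k = 0 := fun k hk => by
    rw [arrayTerm, mul_assoc, cell_pow_mul_of_lt hk, sub_self, mul_zero]
  rw [arraySeries, arraySeries, tsum_eq_tsum_nat_add_of_eq_zero v hlow, ← tsum_mul_left]
  refine tsum_congr fun k => ?_
  simp only [arrayTerm, Function.comp_apply, dilate_cell, mul_zero, pow_add]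
  ring

theorem arrayTerm_add (m a : ℕ) (y : ArrayIndex p → ℝ) (k : ℕ) :
    arrayTerm p b (m + a) y k = arrayTerm p b m (y ∘ shift a) k + arrayTerm p b a y k := by
  simp only [arrayTerm, Function.comp_apply, shift_cell, zero_add]
  ring

theorem arraySeries_add {m a : ℕ} {y : ArrayIndex p → ℝ}
    (hm : Summable (arrayTerm p b m (y ∘ shift a))) (ha : Summable (arrayTerm p b a y)) :
    arraySeries p b (m + a) y = arraySeries p b m (y ∘ shift a) + arraySeries p b a y := by
  simp only [arraySeries, arrayTerm_add m a y]
  exact hm.tsum_add ha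

end ArraySeries

section ProductLaw

variable {p : ℕ} [NeZero p] {b : ℝ} (μ : Measure ℝ) [IsProbabilityMeasure μ]

theorem ae_summable_arrayTerm (hb0 : 0 ≤ b) (hb1 : b < 1) {r : ℝ} (hr0 : 0 < r) (hr1 : r ≤ 1)
    (hmom : Integrable (fun x : ℝ × ℝ => |x.1 - x.2| ^ r) (μ.prod μ)) :
    ∀ᵐ y ∂(Measure.infinitePi fun _ : ArrayIndex p => μ), ∀ n,
      Summable (arrayTerm p b n y) := by
  refine ae_all_iff.2 fun n => ae_summable_of_tsum_lintegral_rpow_ne_top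
    (fun k => (measurable_arrayTerm n k).aemeasurable) hr0 hr1 ?_
  set C := ∫⁻ x, ENNReal.ofReal (|x.1 - x.2| ^ r) ∂(μ.prod μ)
  have hterm : ∀ k, ∫⁻ y, ENNReal.ofReal (|arrayTerm p b n y k| ^ r)
      ∂(Measure.infinitePi fun _ : ArrayIndex p => μ) ≤ ENNReal.ofReal (b ^ r) ^ k * C := by
    intro k
    have hsplit : ∀ y : ArrayIndex p → ℝ, ENNReal.ofReal (|arrayTerm p b n y k| ^ r) =
        ENNReal.ofReal (b ^ r) ^ k * ENNReal.ofReal (|y (cell p k n) - y (cell p k 0)| ^ r) := by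
      intro y
      rw [arrayTerm, abs_mul, abs_pow, abs_of_nonneg hb0, Real.mul_rpow (by positivity)
        (abs_nonneg _), ← Real.rpow_natCast_mul hb0, mul_comm (k : ℝ), Real.rpow_mul_natCast hb0,
        ENNReal.ofReal_mul (by positivity), ENNReal.ofReal_pow (by positivity)]
    simp_rw [hsplit]
    rw [lintegral_const_mul _ (by fun_prop)]
    gcongr
    exact lintegral_rpow_abs_sub_infinitePi_le μ hr0 _ _
  have hbr : ENNReal.ofReal (b ^ r) < 1 := ENNReal.ofReal_lt_one.2 (Real.rpow_lt_one hb0 hb1 hr0)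
  refine ne_top_of_le_ne_top ?_ (ENNReal.tsum_le_tsum hterm)
  rw [ENNReal.tsum_mul_right, ENNReal.tsum_geometric]
  exact ENNReal.mul_ne_top (ENNReal.inv_ne_top.2 (tsub_pos_of_lt hbr).ne')
    hmom.lintegral_lt_top.ne

theorem selfSimilar_arraySeries (hp : p.Prime) (hb : 0 < b) :
    SelfSimilar (Measure.infinitePi fun _ : ArrayIndex p => μ) (arraySeries p b)
      (fun n => padicNormNat p n ^ (-Real.logb p b)) := by
  intro n hn
  obtain ⟨v, u, hpu, rfl⟩ := Nat.exists_eq_pow_mul_and_not_dvd (by omega : n ≠ 0) p hp.ne_one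
  have hval : padicValNat p (p ^ v * u) = v := by
    have := Fact.mk hp
    rw [padicValNat.mul (pow_ne_zero _ hp.ne_zero) (by rintro rfl; simp at hpu),
      padicValNat.prime_pow, padicValNat.eq_zero_of_not_dvd hpu, add_zero]
  simp only [padicNormNat_rpow_neg_logb hp hb (by omega : p ^ v * u ≠ 0), hval]
  exact map_eq_map_of_ae_eq_comp
    (measurePreserving_comp_infinitePi μ (dilate_injective ((hp.coprime_iff_not_dvd).2 hpu)))
    (measurable_pi_lambda _ fun m => (measurable_arraySeries m).const_mul _)
    (ae_of_all _ fun y => funext fun m => arraySeries_pow_mul v u m y)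

theorem stationaryIncrements_arraySeries
    (hsum : ∀ᵐ y ∂(Measure.infinitePi fun _ : ArrayIndex p => μ), ∀ n,
      Summable (arrayTerm p b n y)) :
    StationaryIncrements (Measure.infinitePi fun _ : ArrayIndex p => μ) (arraySeries p b) := by
  intro a _
  have hT := measurePreserving_comp_infinitePi μ (shift_injective (p := p) a)
  refine (map_eq_map_of_ae_eq_comp hT (measurable_pi_lambda _ fun m =>
    (measurable_arraySeries _).sub (measurable_arraySeries _)) ?_).symm
  filter_upwards [hsum, hT.quasiMeasurePreserving.ae hsum] with y hy hTy
  funext m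
  simp only [Function.comp_apply, Pi.sub_apply]
  rw [Nat.add_right_comm m a 1, arraySeries_add (hTy _) (hy a), arraySeries_add (hTy _) (hy a)]
  ring

end ProductLaw

theorem stmt14_general {Ω : Type*} [MeasurableSpace Ω] (P : Measure Ω)
    (p : ℕ) (hp : p.Prime) (b : ℝ) (hb0 : 0 < b) (hb1 : b < 1)
    (Y : ℕ → ℕ → Ω → ℝ) (hYmeas : ∀ k j, Measurable (Y k j))
    (μ : Measure ℝ) [IsProbabilityMeasure μ]
    (hlaw : ∀ k j : ℕ, j < p ^ (k + 1) → Measure.map (Y k j) P = μ)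
    (hindep : iIndepFun
      (fun kj : {q : ℕ × ℕ // q.2 < p ^ (q.1 + 1)} => Y kj.1.1 kj.1.2) P)
    (hmom : ∃ q : ℝ, 0 < q ∧
      Integrable (fun yy : ℝ × ℝ => |yy.1 - yy.2| ^ q) (μ.prod μ)) :
    (∀ n : ℕ, ∀ᵐ ω ∂P, ∃ L : ℝ, Filter.Tendsto
        (fun K : ℕ => ∑ k ∈ Finset.range K,
          b ^ k * (Y k (n % p ^ (k + 1)) ω - Y k 0 ω)) Filter.atTop (nhds L)) ∧
    ∃ X : ℕ → Ω → ℝ, (∀ n, Measurable (X n)) ∧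
      (∀ n : ℕ, ∀ᵐ ω ∂P, Filter.Tendsto
        (fun K : ℕ => ∑ k ∈ Finset.range K,
          b ^ k * (Y k (n % p ^ (k + 1)) ω - Y k 0 ω)) Filter.atTop (nhds (X n ω))) ∧
      SelfSimilar P X (fun n => (padicNormNat p n) ^ (-(Real.logb p b))) ∧
      StationaryIncrements P X := by
  obtain ⟨q, hq, hint⟩ := hmom
  have : NeZero p := ⟨hp.ne_zero⟩
  let Φ : Ω → ArrayIndex p → ℝ := fun ω i => Y i.1.1 i.1.2 ω
  have hΦ : Measurable Φ := measurable_pi_lambda _ fun i => hYmeas _ _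
  have hlawΦ : P.map Φ = Measure.infinitePi fun _ => μ := by
    rw [hindep.map_fun_eq_infinitePi_map fun i => hYmeas _ _]
    exact congrArg Measure.infinitePi (funext fun i => hlaw _ _ i.2)
  have hmom' : Integrable (fun x : ℝ × ℝ => |x.1 - x.2| ^ min q 1) (μ.prod μ) := by
    simpa only [Real.norm_eq_abs] using
      integrable_norm_rpow_of_le (f := fun x : ℝ × ℝ => x.1 - x.2) (by fun_prop) (by positivity)
        hq.le (min_le_left q 1) (by simpa only [Real.norm_eq_abs] using hint)
  have hsumν := ae_summable_arrayTerm (p := p) (b := b) μ hb0.le hb1 (lt_min hq one_pos)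
    (min_le_right q 1) hmom'
  have hsum : ∀ᵐ ω ∂P, ∀ n, Summable (arrayTerm p b n (Φ ω)) :=
    ae_of_ae_map hΦ.aemeasurable (hlawΦ ▸ hsumν)
  have hconv : ∀ n, ∀ᵐ ω ∂P, Tendsto (fun K => ∑ k ∈ Finset.range K,
      b ^ k * (Y k (n % p ^ (k + 1)) ω - Y k 0 ω)) atTop (nhds (arraySeries p b n (Φ ω))) :=
    fun n => hsum.mono fun ω hω => by
      simpa only [arraySeries, arrayTerm, cell, Φ, Nat.zero_mod] using
        (hω n).hasSum.tendsto_sum_nat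
  refine ⟨fun n => (hconv n).mono fun ω h => ⟨_, h⟩, fun n ω => arraySeries p b n (Φ ω),
    fun n => (measurable_arraySeries n).comp hΦ, hconv, ?_, ?_⟩
  · exact SelfSimilar.comp_of_map hΦ measurable_arraySeries
      (hlawΦ ▸ selfSimilar_arraySeries μ hp hb0)
  · exact StationaryIncrements.comp_of_map hΦ measurable_arraySeries
      (hlawΦ ▸ stationaryIncrements_arraySeries μ hsumν)

/-- Example 3.1: the series `∑ₖ bᵏ (Yᵏ_n − Yᵏ_0)`, built from an i.i.d. array extended
`p^{k+1}`-periodically in each row, converges a.s. and defines a dt-ss-si process of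
type II with `H = -log_p b`. -/
theorem stmt14 {Ω : Type*} [MeasurableSpace Ω] (P : Measure Ω) [IsProbabilityMeasure P]
    (p : ℕ) (hp : p.Prime) (b : ℝ) (hb0 : 0 < b) (hb1 : b < 1)
    (Y : ℕ → ℕ → Ω → ℝ) (hYmeas : ∀ k j, Measurable (Y k j))
    (μ : Measure ℝ) [IsProbabilityMeasure μ]
    (hlaw : ∀ k j : ℕ, j < p ^ (k + 1) → Measure.map (Y k j) P = μ)
    (hindep : iIndepFun
      (fun kj : {q : ℕ × ℕ // q.2 < p ^ (q.1 + 1)} => Y kj.1.1 kj.1.2) P)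
    (hnd : ∀ c : ℝ, μ ≠ Measure.dirac c)
    (hmom : ∃ q : ℝ, 0 < q ∧
      Integrable (fun yy : ℝ × ℝ => |yy.1 - yy.2| ^ q) (μ.prod μ)) :
    (∀ n : ℕ, ∀ᵐ ω ∂P, ∃ L : ℝ, Filter.Tendsto
        (fun K : ℕ => ∑ k ∈ Finset.range K,
          b ^ k * (Y k (n % p ^ (k + 1)) ω - Y k 0 ω)) Filter.atTop (nhds L)) ∧
    ∃ X : ℕ → Ω → ℝ, (∀ n, Measurable (X n)) ∧
      (∀ n : ℕ, ∀ᵐ ω ∂P, Filter.Tendsto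
        (fun K : ℕ => ∑ k ∈ Finset.range K,
          b ^ k * (Y k (n % p ^ (k + 1)) ω - Y k 0 ω)) Filter.atTop (nhds (X n ω))) ∧
      SelfSimilar P X (fun n => (padicNormNat p n) ^ (-(Real.logb p b))) ∧
      StationaryIncrements P X :=
  stmt14_general P p hp b hb0 hb1 Y hYmeas μ hlaw hindep hmom
end
end

section
/- Let p be a prime, H > 0, and let X = (X_n)_{n∈ℕ₀} be a dt-ss-si process with scaling function b(n) = (|n|_p)^H such that E(X₁²) < ∞. Then X is almost periodic in L²: for every ε > 0 there exists N ∈ ℕ such that among any N consecutive positive integers there is an integer τ with E((X_{n+τ} − X_n)²) ≤ ε for all n ∈ ℕ₀. -/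
/-!
Write `‖·‖` for the `L²(P)` norm and `c = p ^ (-H) < 1`. Self-similarity at scale `p` gives
`X (p * m) ≐ c * X m`: for `m = 0` this forces `X 0 = 0` a.s., and in general
`‖X (p * m)‖ = c * ‖X m‖`. Stationary increments give `‖X (n + τ) - X n‖ = ‖X τ‖`, hence
`‖X (m + 1)‖ ≤ ‖X m‖ + ‖X 1‖`. Writing `m = p * (m / p) + m % p` then bounds `‖X m‖` by
`K = p * ‖X 1‖ / (1 - c)` for all `m`, so every multiple `τ` of `p ^ k` satisfies
`‖X (n + τ) - X n‖ ≤ c ^ k * K`, and such multiples occur among any `p ^ k` consecutive integers.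
-/

open MeasureTheory ProbabilityTheory Filter

noncomputable section

open scoped ENNReal

lemma padicNormNat_self {p : ℕ} (hp : p.Prime) : padicNormNat p p = (p : ℝ)⁻¹ := by
  simp [padicNormNat, padicNorm.padicNorm_p hp.one_lt]

lemma Nat.exists_mul_mem_Ico {Q : ℕ} (hQ : 0 < Q) (a : ℕ) : ∃ m, Q * m ∈ Set.Ico a (a + Q) := by
  refine ⟨(a + Q - 1) / Q, ?_, ?_⟩ <;>
  · have := Nat.div_add_mod (a + Q - 1) Q
    have := Nat.mod_lt (a + Q - 1) hQ
    omega

lemma integral_sq_eq_lpNorm_sq {Ω : Type*} [MeasurableSpace Ω] {P : Measure Ω} {Z : Ω → ℝ}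
    (hZ : AEStronglyMeasurable Z P) : ∫ ω, Z ω ^ 2 ∂P = lpNorm Z 2 P ^ 2 := by
  rw [lpNorm_eq_integral_norm_rpow_toReal two_ne_zero ENNReal.ofNat_ne_top hZ]
  simp only [ENNReal.toReal_ofNat, Real.rpow_two, Real.norm_eq_abs, sq_abs]
  rw [← Real.rpow_natCast, ← Real.rpow_mul (integral_nonneg fun ω => sq_nonneg _)]
  norm_num

section ScalingSequence

variable {f : ℕ → ℝ≥0∞} {p : ℕ} {c σ : ℝ≥0∞}

lemma le_add_mul_of_forall_succ_le (hstep : ∀ m, f (m + 1) ≤ f m + σ) (a j : ℕ) :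
    f (a + j) ≤ f a + j * σ := by
  induction j with
  | zero => simp
  | succ j ih =>
    calc f (a + (j + 1)) ≤ f (a + j) + σ := hstep _
      _ ≤ f a + j * σ + σ := by gcongr
      _ = f a + (j + 1 : ℕ) * σ := by push_cast; ring

lemma le_div_of_forall_succ_le_of_mul_eq (hp : 1 < p) (hc : c < 1) (h0 : f 0 = 0)
    (hstep : ∀ m, f (m + 1) ≤ f m + σ) (hscale : ∀ m, f (p * m) = c * f m) (m : ℕ) :
    f m ≤ p * σ / (1 - c) := by
  set K := p * σ / (1 - c)
  have hK : c * K + p * σ = K := by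
    rw [← ENNReal.div_mul_cancel (b := p * σ) (tsub_pos_of_lt hc).ne' (by simp)]
    change c * K + K * (1 - c) = K
    rw [mul_comm K, ← add_mul, add_tsub_cancel_of_le hc.le, one_mul]
  induction m using Nat.strong_induction_on with
  | _ m ih =>
    rcases Nat.eq_zero_or_pos m with rfl | hm
    · simp [h0]
    calc f m = f (p * (m / p) + m % p) := by rw [Nat.div_add_mod]
      _ ≤ c * f (m / p) + (m % p : ℕ) * σ := by
          rw [← hscale]; exact le_add_mul_of_forall_succ_le hstep _ _
      _ ≤ c * K + p * σ := by
          gcongr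
          · exact ih _ (Nat.div_lt_self hm hp)
          · exact_mod_cast (Nat.mod_lt m (by omega)).le
      _ = K := hK

lemma exists_forall_pow_mul_le (hp : 1 < p) (hc : c < 1) (h0 : f 0 = 0) (hσ : σ ≠ ⊤)
    (hstep : ∀ m, f (m + 1) ≤ f m + σ) (hscale : ∀ m, f (p * m) = c * f m)
    {δ : ℝ≥0∞} (hδ : 0 < δ) : ∃ k, ∀ m, f (p ^ k * m) ≤ δ := by
  have hpow : ∀ k m, f (p ^ k * m) = c ^ k * f m := by
    intro k
    induction k with
    | zero => simp
    | succ k ih => intro m; rw [pow_succ', mul_assoc, hscale, ih, pow_succ', mul_assoc]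
  have hK : p * σ / (1 - c) ≠ ⊤ :=
    ENNReal.div_ne_top (ENNReal.mul_ne_top (by simp) hσ) (tsub_pos_of_lt hc).ne'
  have hlim : Tendsto (fun k => c ^ k * (p * σ / (1 - c))) atTop (nhds 0) := by
    simpa using ENNReal.Tendsto.mul_const (ENNReal.tendsto_pow_atTop_nhds_zero_of_lt_one hc)
      (Or.inr hK)
  obtain ⟨k, hk⟩ := (hlim.eventually (gt_mem_nhds hδ)).exists
  refine ⟨k, fun m => ?_⟩
  calc f (p ^ k * m) = c ^ k * f m := hpow k m
    _ ≤ c ^ k * (p * σ / (1 - c)) := by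
        gcongr; exact le_div_of_forall_succ_le_of_mul_eq hp hc h0 hstep hscale m
    _ ≤ δ := hk.le

end ScalingSequence

lemma ae_eq_zero_of_identDistrib_const_mul {Ω : Type*} [MeasurableSpace Ω] {P : Measure Ω}
    [IsFiniteMeasure P] {Y : Ω → ℝ} {c : ℝ} (hc : |c| < 1)
    (h : IdentDistrib Y (fun ω => c * Y ω) P P) : Y =ᵐ[P] 0 := by
  have hpow : ∀ k : ℕ, IdentDistrib Y (fun ω => c ^ k * Y ω) P P := by
    intro k
    induction k with
    | zero => simpa using IdentDistrib.refl h.aemeasurable_fst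
    | succ k ih =>
      simpa [Function.comp_def, pow_succ', mul_assoc] using
        h.trans (ih.comp (measurable_const_mul c))
  -- `φ` is bounded, continuous and vanishes only at `0`; dominated convergence along
  -- `c ^ k * Y → 0` shows `∫ φ ∘ Y = 0`.
  set φ : ℝ → ℝ := fun x => min |x| 1
  have hφ : Continuous φ := by fun_prop
  have hφ_nonneg (x : ℝ) : 0 ≤ φ x := le_min (abs_nonneg x) zero_le_one
  have hφ_norm (x : ℝ) : ‖φ x‖ ≤ 1 := by
    rw [Real.norm_eq_abs, abs_of_nonneg (hφ_nonneg x)]; exact min_le_right _ _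
  have hlim : Tendsto (fun k : ℕ => ∫ ω, φ (c ^ k * Y ω) ∂P) atTop (nhds (∫ _, φ 0 ∂P)) := by
    refine tendsto_integral_of_dominated_convergence (fun _ => 1) (fun k => ?_)
      (integrable_const 1) (fun k => ae_of_all _ fun ω => hφ_norm _) (ae_of_all _ fun ω => ?_)
    · exact (hφ.measurable.comp_aemeasurable (hpow k).aemeasurable_snd).aestronglyMeasurable
    · have := (tendsto_pow_atTop_nhds_zero_of_abs_lt_one hc).mul_const (Y ω)
      rw [zero_mul] at this
      exact (hφ.tendsto 0).comp this
  have hconst (k : ℕ) : ∫ ω, φ (c ^ k * Y ω) ∂P = ∫ ω, φ (Y ω) ∂P :=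
    ((hpow k).comp hφ.measurable).integral_eq.symm
  simp only [hconst, φ, abs_zero, zero_le_one, min_eq_left, integral_zero] at hlim
  have hint : ∫ ω, φ (Y ω) ∂P = 0 := tendsto_nhds_unique tendsto_const_nhds hlim
  have hφY : Integrable (fun ω => φ (Y ω)) P :=
    .of_bound (hφ.measurable.comp_aemeasurable h.aemeasurable_fst).aestronglyMeasurable 1
      (ae_of_all _ fun ω => hφ_norm _)
  filter_upwards [(integral_eq_zero_iff_of_nonneg (fun ω => hφ_nonneg _) hφY).1 hint] with ω hω
  simp_all [φ, min_eq_iff]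

section

variable {Ω : Type*} [MeasurableSpace Ω] {P : Measure Ω} {X : ℕ → Ω → ℝ}

lemma EqDistFam.identDistrib {ι : Type*} {Y : ι → Ω → ℝ} {Z : ι → Ω → ℝ}
    (hY : ∀ i, Measurable (Y i)) (hZ : ∀ i, Measurable (Z i)) (h : EqDistFam P P Y Z) :
    IdentDistrib (fun ω i => Y i ω) (fun ω i => Z i ω) P P :=
  ⟨(measurable_pi_lambda _ hY).aemeasurable, (measurable_pi_lambda _ hZ).aemeasurable, h⟩

lemma SelfSimilar.identDistrib {b : ℕ → ℝ} (hX : ∀ n, Measurable (X n)) (hss : SelfSimilar P X b)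
    {n : ℕ} (hn : 1 ≤ n) (m : ℕ) : IdentDistrib (X (n * m)) (fun ω => b n * X m ω) P P :=
  ((hss n hn).identDistrib (fun _ => hX _) (fun _ => (hX _).const_mul _)).comp
    (measurable_pi_apply m)

lemma StationaryIncrements.identDistrib_sub (hX : ∀ n, Measurable (X n))
    (hsi : StationaryIncrements P X) (n τ : ℕ) :
    IdentDistrib (fun ω => X (n + τ) ω - X n ω) (fun ω => X τ ω - X 0 ω) P P := by
  rcases Nat.eq_zero_or_pos n with rfl | hn
  · simp only [zero_add]
    exact IdentDistrib.refl ((hX τ).sub (hX 0)).aemeasurable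
  have hsum : Measurable fun u : ℕ → ℝ => ∑ j ∈ Finset.range τ, u j :=
    Finset.measurable_sum _ fun j _ => measurable_pi_apply j
  have := ((hsi n hn).identDistrib (fun _ => (hX _).sub (hX _))
    (fun _ => (hX _).sub (hX _))).comp hsum
  -- both sides telescope
  convert this.symm using 1 <;> funext ω
  · have := Finset.sum_range_sub (fun j => X (j + n) ω) τ
    simp only [add_right_comm _ 1 n] at this
    show X (n + τ) ω - X n ω = ∑ j ∈ Finset.range τ, (X (j + n + 1) ω - X (j + n) ω)
    rw [this, zero_add, add_comm]
  · simp [Finset.sum_range_sub (fun j => X j ω)]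

lemma StationaryIncrements.eLpNorm_sub_eq (hX : ∀ n, Measurable (X n))
    (hsi : StationaryIncrements P X) (hX0 : X 0 =ᵐ[P] 0) (q : ℝ≥0∞) (n τ : ℕ) :
    eLpNorm (fun ω => X (n + τ) ω - X n ω) q P = eLpNorm (X τ) q P := by
  rw [(hsi.identDistrib_sub hX n τ).eLpNorm_eq]
  exact eLpNorm_congr_ae (by filter_upwards [hX0] with ω hω using by simp [hω])

lemma StationaryIncrements.eLpNorm_succ_le (hX : ∀ n, Measurable (X n))
    (hsi : StationaryIncrements P X) (hX0 : X 0 =ᵐ[P] 0) {q : ℝ≥0∞} (hq : 1 ≤ q) (m : ℕ) :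
    eLpNorm (X (m + 1)) q P ≤ eLpNorm (X m) q P + eLpNorm (X 1) q P :=
  calc eLpNorm (X (m + 1)) q P = eLpNorm (X m + fun ω => X (m + 1) ω - X m ω) q P := by
        congr 1; funext ω; simp
    _ ≤ eLpNorm (X m) q P + eLpNorm (fun ω => X (m + 1) ω - X m ω) q P :=
        eLpNorm_add_le (hX m).aestronglyMeasurable
          ((hX _).sub (hX m)).aestronglyMeasurable hq
    _ = eLpNorm (X m) q P + eLpNorm (X 1) q P := by rw [hsi.eLpNorm_sub_eq hX hX0]

lemma SelfSimilar.eLpNorm_mul_eq {b : ℕ → ℝ} (hX : ∀ n, Measurable (X n))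
    (hss : SelfSimilar P X b) {n : ℕ} (hn : 1 ≤ n) (q : ℝ≥0∞) (m : ℕ) :
    eLpNorm (X (n * m)) q P = ‖b n‖ₑ * eLpNorm (X m) q P := by
  rw [(hss.identDistrib hX hn m).eLpNorm_eq, ← eLpNorm_const_smul]
  rfl

end

/-- Proposition 4.1: a square-integrable type-II dt-ss-si process is almost periodic
in `L²`. -/
theorem stmt15 {Ω : Type*} [MeasurableSpace Ω] (P : Measure Ω) [IsProbabilityMeasure P]
    (X : ℕ → Ω → ℝ) (hXmeas : ∀ n, Measurable (X n))
    (p : ℕ) (hp : p.Prime) (H : ℝ) (hH : 0 < H)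
    (hss : SelfSimilar P X (fun n => (padicNormNat p n) ^ H))
    (hsi : StationaryIncrements P X)
    (hL2 : Integrable (fun ω => (X 1 ω) ^ 2) P) :
    ∀ ε : ℝ, 0 < ε → ∃ N : ℕ, 0 < N ∧ ∀ a : ℕ, 1 ≤ a →
      ∃ τ : ℕ, a ≤ τ ∧ τ < a + N ∧
        ∀ n : ℕ, ∫ ω, (X (n + τ) ω - X n ω) ^ 2 ∂P ≤ ε := by
  intro ε hε
  have hc0 : 0 ≤ padicNormNat p p ^ H := by rw [padicNormNat_self hp]; positivity
  have hc1 : padicNormNat p p ^ H < 1 := by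
    rw [padicNormNat_self hp]
    exact Real.rpow_lt_one (by positivity) (inv_lt_one_of_one_lt₀ (by exact_mod_cast hp.one_lt)) hH
  have hX0 : X 0 =ᵐ[P] 0 :=
    ae_eq_zero_of_identDistrib_const_mul (abs_lt.2 ⟨by linarith, hc1⟩)
      (by simpa using hss.identDistrib hXmeas hp.one_le 0)
  have hX1 : eLpNorm (X 1) 2 P ≠ ⊤ :=
    ((memLp_two_iff_integrable_sq (hXmeas 1).aestronglyMeasurable).2 hL2).eLpNorm_ne_top
  obtain ⟨k, hk⟩ := exists_forall_pow_mul_le (f := fun m => eLpNorm (X m) 2 P) hp.one_lt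
    (by simpa [Real.enorm_eq_ofReal_abs, abs_of_nonneg hc0] using hc1)
    (by simpa using eLpNorm_congr_ae hX0) hX1
    (hsi.eLpNorm_succ_le hXmeas hX0 one_le_two) (hss.eLpNorm_mul_eq hXmeas hp.one_le 2)
    (ENNReal.ofReal_pos.2 (Real.sqrt_pos.2 hε))
  refine ⟨p ^ k, pow_pos hp.pos k, fun a _ => ?_⟩
  obtain ⟨m, ham, hma⟩ := Nat.exists_mul_mem_Ico (pow_pos hp.pos k) a
  refine ⟨p ^ k * m, ham, hma, fun n => ?_⟩
  have hnorm := (hsi.eLpNorm_sub_eq hXmeas hX0 2 n _).trans_le (hk m)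
  rw [integral_sq_eq_lpNorm_sq (by fun_prop), ← toReal_eLpNorm (by fun_prop)]
  calc _ ≤ √ε ^ 2 := by
        gcongr; exact ENNReal.toReal_le_of_le_ofReal (Real.sqrt_nonneg _) hnorm
    _ = ε := Real.sq_sqrt hε.le
end
end

section
/- Let p be a prime and H > 0. Let {A^{(m)}_ℓ : (m,ℓ) ∈ I} be a family in L²(Ω;ℂ), indexed by I = {(m,ℓ) : m ∈ ℕ, 0 < ℓ < p^m, p ∤ ℓ}, which is orthogonal (E(A^{(m)}_ℓ · conj(A^{(m')}_{ℓ'})) = 0 whenever (m,ℓ) ≠ (m',ℓ')) and satisfies the joint distributional identity (p^{−H}·A^{(m)}_ℓ)_{(m,ℓ)∈I} ≐ (Σ_{t=0}^{p−1} A^{(m+1)}_{t·p^m+ℓ})_{(m,ℓ)∈I}. Then the series Σ_{m=1}^∞ Σ_{0<ℓ<p^m, p∤ℓ} A^{(m)}_ℓ·e(nℓ/p^m) converges in L²(Ω;ℂ) uniformly in n: for every ε > 0 there exists M₀ such that for all N ≥ M ≥ M₀ and all n ∈ ℕ₀, E|Σ_{m=M}^{N} Σ_{0<ℓ<p^m,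 p∤ℓ} A^{(m)}_ℓ·e(nℓ/p^m)|² ≤ ε. -/
open MeasureTheory ProbabilityTheory Filter

noncomputable section

/-- The index set `I = {(m, ℓ) : m ≥ 1, 0 < ℓ < p^m, p ∤ ℓ}`. -/
def PIdx (p : ℕ) : Type := {q : ℕ × ℕ // 1 ≤ q.1 ∧ 0 < q.2 ∧ q.2 < p ^ q.1 ∧ ¬ p ∣ q.2}

/-- `e x = exp(2πix)`. -/
def eFun (x : ℝ) : ℂ := Complex.exp (2 * Real.pi * Complex.I * x)

/-!
Write `σ²(m, ℓ) = E|A⁽ᵐ⁾_ℓ|²`. Taking second moments in the scaling identity and using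
orthogonality gives `p^(-2H) σ²(m, ℓ) = ∑ₜ σ²(m + 1, t pᵐ + ℓ)`; as the children `t pᵐ + ℓ`
of the level-`m` indices enumerate level `m + 1` exactly once, the level sums
`S(m) = ∑_ℓ σ²(m, ℓ)` decay geometrically with ratio `p^(-2H) < 1`. Since `|e(·)| = 1`,
Pythagoras turns the mean square of a block `M ≤ m ≤ N` of the series into `∑_{m=M}^N S(m)`,
whatever `n` is: a tail of a convergent series.
-/
open Finset

section OrthogonalSums

variable {Ω ι : Type*} [MeasurableSpace Ω] {P : Measure Ω}

lemma integrable_mul_conj {f g : Ω → ℂ} (hf : MemLp f 2 P) (hg : MemLp g 2 P) :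
    Integrable (fun ω => f ω * starRingEnd ℂ (g ω)) P :=
  hf.integrable_mul hg.star

lemma ofReal_integral_norm_sq (f : Ω → ℂ) :
    ((∫ ω, ‖f ω‖ ^ 2 ∂P : ℝ) : ℂ) = ∫ ω, f ω * starRingEnd ℂ (f ω) ∂P := by
  rw [← integral_complex_ofReal]
  refine integral_congr_ae (Eventually.of_forall fun ω => ?_)
  simp only [Complex.mul_conj, Complex.normSq_eq_norm_sq, Complex.ofReal_pow]

theorem integral_norm_sq_sum_of_orthogonal (s : Finset ι) {f : ι → Ω → ℂ}
    (hL2 : ∀ i ∈ s, MemLp (f i) 2 P)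
    (horth : ∀ i ∈ s, ∀ j ∈ s, i ≠ j → ∫ ω, f i ω * starRingEnd ℂ (f j ω) ∂P = 0) :
    ∫ ω, ‖∑ i ∈ s, f i ω‖ ^ 2 ∂P = ∑ i ∈ s, ∫ ω, ‖f i ω‖ ^ 2 ∂P := by
  have hint : ∀ i ∈ s, ∀ j ∈ s, Integrable (fun ω => f i ω * starRingEnd ℂ (f j ω)) P :=
    fun i hi j hj => integrable_mul_conj (hL2 i hi) (hL2 j hj)
  apply Complex.ofReal_injective
  push_cast
  simp only [ofReal_integral_norm_sq, map_sum, sum_mul_sum]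
  rw [integral_finsetSum _ fun i hi => integrable_finsetSum _ (hint i hi)]
  refine sum_congr rfl fun i hi => ?_
  rw [integral_finsetSum _ (hint i hi)]
  exact sum_eq_single_of_mem i hi fun j hj hji => horth i hi j hj hji.symm

theorem integral_norm_sq_sum_sum_of_orthogonal {κ : Type*} (s : Finset ι) (t : ι → Finset κ)
    {f : ι → κ → Ω → ℂ} (hL2 : ∀ i ∈ s, ∀ j ∈ t i, MemLp (f i j) 2 P)
    (horth : ∀ i ∈ s, ∀ j ∈ t i, ∀ i' ∈ s, ∀ j' ∈ t i', (i, j) ≠ (i', j') →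
      ∫ ω, f i j ω * starRingEnd ℂ (f i' j' ω) ∂P = 0) :
    ∫ ω, ‖∑ i ∈ s, ∑ j ∈ t i, f i j ω‖ ^ 2 ∂P = ∑ i ∈ s, ∑ j ∈ t i, ∫ ω, ‖f i j ω‖ ^ 2 ∂P := by
  simp only [sum_sigma']
  refine integral_norm_sq_sum_of_orthogonal _ (fun q hq => ?_) fun q hq q' hq' hne => ?_
  · rw [mem_sigma] at hq
    exact hL2 _ hq.1 _ hq.2
  · rw [mem_sigma] at hq hq'
    refine horth _ hq.1 _ hq.2 _ hq'.1 _ hq'.2 fun h => hne ?_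
    exact Sigma.ext (congrArg Prod.fst h) (heq_of_eq (congrArg Prod.snd h))

theorem sq_mul_integral_norm_sq_eq_sum {X : Ω → ℂ} (s : Finset ι) {Y : ι → Ω → ℂ} (c : ℝ)
    (hd : IdentDistrib (fun ω => (c : ℂ) * X ω) (fun ω => ∑ i ∈ s, Y i ω) P P)
    (hL2 : ∀ i ∈ s, MemLp (Y i) 2 P)
    (horth : ∀ i ∈ s, ∀ j ∈ s, i ≠ j → ∫ ω, Y i ω * starRingEnd ℂ (Y j ω) ∂P = 0) :
    c ^ 2 * ∫ ω, ‖X ω‖ ^ 2 ∂P = ∑ i ∈ s, ∫ ω, ‖Y i ω‖ ^ 2 ∂P := by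
  have h := (hd.comp (u := fun z : ℂ => ‖z‖ ^ 2) (by fun_prop)).integral_eq
  simp only [Function.comp_def, norm_mul, mul_pow, Complex.norm_real, Real.norm_eq_abs,
    sq_abs] at h
  rw [← integral_norm_sq_sum_of_orthogonal s hL2 horth, ← h, integral_const_mul]

end OrthogonalSums

theorem EqDistFam.identDistrib_apply {ι Ω₁ Ω₂ E : Type*} [MeasurableSpace Ω₁]
    [MeasurableSpace Ω₂] [MeasurableSpace E] {P₁ : Measure Ω₁} {P₂ : Measure Ω₂}
    {X : ι → Ω₁ → E} {Y : ι → Ω₂ → E} (h : EqDistFam P₁ P₂ X Y)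
    (hX : ∀ i, Measurable (X i)) (hY : ∀ i, Measurable (Y i)) (i : ι) :
    IdentDistrib (X i) (Y i) P₁ P₂ where
  aemeasurable_fst := (hX i).aemeasurable
  aemeasurable_snd := (hY i).aemeasurable
  map_eq := by
    have := congrArg (Measure.map (Function.eval i)) h
    rwa [Measure.map_map (measurable_pi_apply i) (measurable_pi_lambda _ hX),
      Measure.map_map (measurable_pi_apply i) (measurable_pi_lambda _ hY)] at this

theorem Summable.exists_forall_sum_Icc_lt {f : ℕ → ℝ} (hf : Summable f) {ε : ℝ} (hε : 0 < ε) :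
    ∃ M₀, ∀ M N, M₀ ≤ M → ∑ m ∈ Icc M N, f m < ε := by
  obtain ⟨s, hs⟩ := hf.vanishing (Iio_mem_nhds hε)
  obtain ⟨M₀, hM₀⟩ := s.exists_nat_subset_range
  refine ⟨M₀, fun M N hM => hs _ (disjoint_left.2 fun m hm hms => ?_)⟩
  have := mem_range.1 (hM₀ hms)
  have := (mem_Icc.1 hm).1
  omega

lemma sum_range_mul_eq_sum_sum {M : Type*} [AddCommMonoid M] (g : ℕ → M) (p n : ℕ) :
    ∑ ℓ ∈ range (p * n), g ℓ = ∑ t ∈ range p, ∑ ℓ ∈ range n, g (t * n + ℓ) := by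
  induction p with
  | zero => simp
  | succ p ih => rw [add_mul, one_mul, sum_range_add, ih, sum_range_succ]

lemma norm_eFun (x : ℝ) : ‖eFun x‖ = 1 := by
  rw [eFun, ← Complex.norm_exp_ofReal_mul_I (2 * Real.pi * x)]
  push_cast
  ring_nf

def levelIdx (p m : ℕ) : Finset ℕ := (Ioo 0 (p ^ m)).filter (fun ℓ => ¬ p ∣ ℓ)

lemma mem_levelIdx {p m ℓ : ℕ} : ℓ ∈ levelIdx p m ↔ 0 < ℓ ∧ ℓ < p ^ m ∧ ¬ p ∣ ℓ := by
  simp [levelIdx, and_assoc]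

lemma levelIdx_eq_filter_range (p m : ℕ) :
    levelIdx p m = (range (p ^ m)).filter (fun ℓ => ¬ p ∣ ℓ) := by
  ext ℓ
  simp only [mem_levelIdx, mem_filter, mem_range]
  constructor
  · rintro ⟨-, h, h'⟩
    exact ⟨h, h'⟩
  · rintro ⟨h, h'⟩
    exact ⟨Nat.pos_of_ne_zero (by rintro rfl; exact h' (dvd_zero p)), h, h'⟩

lemma dvd_mul_pow_add_iff {p m : ℕ} (hm : m ≠ 0) (t ℓ : ℕ) : p ∣ t * p ^ m + ℓ ↔ p ∣ ℓ :=
  (Nat.dvd_add_right ((dvd_pow_self p hm).mul_left t))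

lemma mul_pow_add_mem_levelIdx {p m t ℓ : ℕ} (hm : m ≠ 0) (ht : t < p)
    (hℓ : ℓ ∈ levelIdx p m) : t * p ^ m + ℓ ∈ levelIdx p (m + 1) := by
  obtain ⟨h0, hlt, hdvd⟩ := mem_levelIdx.1 hℓ
  refine mem_levelIdx.2 ⟨by omega, ?_, by rwa [dvd_mul_pow_add_iff hm]⟩
  calc t * p ^ m + ℓ < (t + 1) * p ^ m := by rw [add_one_mul]; omega
    _ ≤ p * p ^ m := Nat.mul_le_mul_right _ ht
    _ = p ^ (m + 1) := (pow_succ' p m).symm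

lemma sum_levelIdx_succ {M : Type*} [AddCommMonoid M] {p m : ℕ} (hm : m ≠ 0) (g : ℕ → M) :
    ∑ ℓ ∈ levelIdx p (m + 1), g ℓ = ∑ ℓ ∈ levelIdx p m, ∑ t ∈ range p, g (t * p ^ m + ℓ) := by
  simp only [levelIdx_eq_filter_range, sum_filter, pow_succ', sum_range_mul_eq_sum_sum,
    dvd_mul_pow_add_iff hm]
  rw [sum_comm]
  refine sum_congr rfl fun ℓ _ => ?_
  split_ifs <;> simp

section Levels

variable {Ω : Type*} [MeasurableSpace Ω] {P : Measure Ω} {A : ℕ → ℕ → Ω → ℂ} {p : ℕ}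

def levelSecondMoment (P : Measure Ω) (A : ℕ → ℕ → Ω → ℂ) (p m : ℕ) : ℝ :=
  ∑ ℓ ∈ levelIdx p m, ∫ ω, ‖A m ℓ ω‖ ^ 2 ∂P

theorem levelSecondMoment_succ {m : ℕ} (hm : 1 ≤ m) (c : ℝ)
    (hAmeas : ∀ m ℓ, Measurable (A m ℓ))
    (hL2 : ∀ ℓ ∈ levelIdx p (m + 1), MemLp (A (m + 1) ℓ) 2 P)
    (horth : ∀ ℓ ∈ levelIdx p (m + 1), ∀ ℓ' ∈ levelIdx p (m + 1), ℓ ≠ ℓ' →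
      ∫ ω, A (m + 1) ℓ ω * starRingEnd ℂ (A (m + 1) ℓ' ω) ∂P = 0)
    (hscale : EqDistFam P P (fun i : PIdx p => fun ω => (c : ℂ) * A i.1.1 i.1.2 ω)
      (fun i : PIdx p => fun ω => ∑ t ∈ range p, A (i.1.1 + 1) (t * p ^ i.1.1 + i.1.2) ω)) :
    levelSecondMoment P A p (m + 1) = c ^ 2 * levelSecondMoment P A p m := by
  have hm0 : m ≠ 0 := by omega
  rw [levelSecondMoment, sum_levelIdx_succ hm0, levelSecondMoment, mul_sum]
  refine sum_congr rfl fun ℓ hℓ => (sq_mul_integral_norm_sq_eq_sum _ c ?_ ?_ ?_).symm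
  · exact hscale.identDistrib_apply (fun i => measurable_const.mul (hAmeas _ _))
      (fun i => Finset.measurable_sum _ fun t _ => hAmeas _ _) ⟨(m, ℓ), hm, mem_levelIdx.1 hℓ⟩
  · exact fun t ht => hL2 _ (mul_pow_add_mem_levelIdx hm0 (mem_range.1 ht) hℓ)
  · intro t ht t' ht' hne
    refine horth _ (mul_pow_add_mem_levelIdx hm0 (mem_range.1 ht) hℓ)
      _ (mul_pow_add_mem_levelIdx hm0 (mem_range.1 ht') hℓ) fun h => hne ?_
    have hpos : 0 < p ^ m := (mem_levelIdx.1 hℓ).1.trans (mem_levelIdx.1 hℓ).2.1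
    exact Nat.eq_of_mul_eq_mul_right hpos (by omega)

theorem integral_norm_sq_sum_levels (s : Finset ℕ) (θ : ℕ → ℕ → ℝ)
    (hL2 : ∀ m ∈ s, ∀ ℓ ∈ levelIdx p m, MemLp (A m ℓ) 2 P)
    (horth : ∀ m ∈ s, ∀ ℓ ∈ levelIdx p m, ∀ m' ∈ s, ∀ ℓ' ∈ levelIdx p m', (m, ℓ) ≠ (m', ℓ') →
      ∫ ω, A m ℓ ω * starRingEnd ℂ (A m' ℓ' ω) ∂P = 0) :
    ∫ ω, ‖∑ m ∈ s, ∑ ℓ ∈ levelIdx p m, A m ℓ ω * eFun (θ m ℓ)‖ ^ 2 ∂P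
      = ∑ m ∈ s, levelSecondMoment P A p m := by
  rw [integral_norm_sq_sum_sum_of_orthogonal s (levelIdx p)
    (fun m hm ℓ hℓ => (hL2 m hm ℓ hℓ).mul_const _) fun m hm ℓ hℓ m' hm' ℓ' hℓ' hne => ?_]
  · simp only [norm_mul, norm_eFun, mul_one, levelSecondMoment]
  · simp only [map_mul, mul_mul_mul_comm _ (eFun _), integral_mul_const,
      horth m hm ℓ hℓ m' hm' ℓ' hℓ' hne, zero_mul]

theorem summable_levelSecondMoment {c : ℝ} (hc : c ^ 2 < 1)
    (hAmeas : ∀ m ℓ, Measurable (A m ℓ))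
    (hL2 : ∀ m, 1 ≤ m → ∀ ℓ ∈ levelIdx p m, MemLp (A m ℓ) 2 P)
    (horth : ∀ m, 1 ≤ m → ∀ ℓ ∈ levelIdx p m, ∀ m', 1 ≤ m' → ∀ ℓ' ∈ levelIdx p m',
      (m, ℓ) ≠ (m', ℓ') → ∫ ω, A m ℓ ω * starRingEnd ℂ (A m' ℓ' ω) ∂P = 0)
    (hscale : EqDistFam P P (fun i : PIdx p => fun ω => (c : ℂ) * A i.1.1 i.1.2 ω)
      (fun i : PIdx p => fun ω => ∑ t ∈ range p, A (i.1.1 + 1) (t * p ^ i.1.1 + i.1.2) ω)) :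
    Summable (levelSecondMoment P A p) := by
  have hsucc : ∀ m, 1 ≤ m →
      levelSecondMoment P A p (m + 1) = c ^ 2 * levelSecondMoment P A p m :=
    fun m hm => levelSecondMoment_succ hm c hAmeas (hL2 _ (by omega))
      (fun ℓ hℓ ℓ' hℓ' hne => horth _ (by omega) ℓ hℓ _ (by omega) ℓ' hℓ' (by simpa using hne))
      hscale
  refine summable_of_ratio_norm_eventually_le hc (eventually_atTop.2 ⟨1, fun m hm => ?_⟩)
  rw [hsucc m hm, norm_mul, Real.norm_of_nonneg (sq_nonneg c)]

end Levels

theorem stmt18_general {Ω : Type*} [MeasurableSpace Ω] (P : Measure Ω)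
    (p : ℕ) (hp : p.Prime) (H : ℝ) (hH : 0 < H)
    (A : ℕ → ℕ → Ω → ℂ) (hAmeas : ∀ m ℓ, Measurable (A m ℓ))
    (hL2 : ∀ m ℓ : ℕ, 1 ≤ m → 0 < ℓ → ℓ < p ^ m → ¬ p ∣ ℓ → MemLp (A m ℓ) 2 P)
    (horth : ∀ m ℓ m' ℓ' : ℕ, 1 ≤ m → 0 < ℓ → ℓ < p ^ m → ¬ p ∣ ℓ →
      1 ≤ m' → 0 < ℓ' → ℓ' < p ^ m' → ¬ p ∣ ℓ' → (m, ℓ) ≠ (m', ℓ') →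
      ∫ ω, A m ℓ ω * (starRingEnd ℂ) (A m' ℓ' ω) ∂P = 0)
    (hscale : EqDistFam P P
      (fun i : PIdx p => fun ω => (((p : ℝ) ^ (-H) : ℝ) : ℂ) * A i.1.1 i.1.2 ω)
      (fun i : PIdx p => fun ω =>
        ∑ t ∈ Finset.range p, A (i.1.1 + 1) (t * p ^ i.1.1 + i.1.2) ω)) :
    ∀ ε : ℝ, 0 < ε → ∃ M₀ : ℕ, ∀ M N : ℕ, M₀ ≤ M → M ≤ N → ∀ n : ℕ,
      ∫ ω, ‖∑ m ∈ Finset.Icc M N,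
          ∑ ℓ ∈ (Finset.Ioo 0 (p ^ m)).filter (fun ℓ => ¬ p ∣ ℓ),
            A m ℓ ω * eFun ((n : ℝ) * (ℓ : ℝ) / (p : ℝ) ^ m)‖ ^ 2 ∂P ≤ ε := by
  intro ε hε
  set c : ℝ := (p : ℝ) ^ (-H)
  have hc : c ^ 2 < 1 := by
    have hp1 : (1 : ℝ) < p := by exact_mod_cast hp.one_lt
    exact pow_lt_one₀ (by positivity) (Real.rpow_lt_one_of_one_lt_of_neg hp1 (by linarith))
      two_ne_zero
  have hL2' : ∀ m, 1 ≤ m → ∀ ℓ ∈ levelIdx p m, MemLp (A m ℓ) 2 P := fun m hm ℓ hℓ =>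
    hL2 m ℓ hm (mem_levelIdx.1 hℓ).1 (mem_levelIdx.1 hℓ).2.1 (mem_levelIdx.1 hℓ).2.2
  have horth' : ∀ m, 1 ≤ m → ∀ ℓ ∈ levelIdx p m, ∀ m', 1 ≤ m' → ∀ ℓ' ∈ levelIdx p m',
      (m, ℓ) ≠ (m', ℓ') → ∫ ω, A m ℓ ω * starRingEnd ℂ (A m' ℓ' ω) ∂P = 0 :=
    fun m hm ℓ hℓ m' hm' ℓ' hℓ' =>
      horth m ℓ m' ℓ' hm (mem_levelIdx.1 hℓ).1 (mem_levelIdx.1 hℓ).2.1 (mem_levelIdx.1 hℓ).2.2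
        hm' (mem_levelIdx.1 hℓ').1 (mem_levelIdx.1 hℓ').2.1 (mem_levelIdx.1 hℓ').2.2
  obtain ⟨M₀, hM₀⟩ :=
    (summable_levelSecondMoment hc hAmeas hL2' horth' hscale).exists_forall_sum_Icc_lt hε
  refine ⟨M₀ + 1, fun M N hM _ n => ?_⟩
  have hlevel : ∀ m ∈ Icc M N, 1 ≤ m := fun m hm => by have := (mem_Icc.1 hm).1; omega
  refine (integral_norm_sq_sum_levels (Icc M N) (fun m ℓ => n * ℓ / (p : ℝ) ^ m)
    (fun m hm => hL2' m (hlevel m hm))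
    (fun m hm ℓ hℓ m' hm' => horth' m (hlevel m hm) ℓ hℓ m' (hlevel m' hm'))).trans_le ?_
  exact (hM₀ M N (by omega)).le

/-- Proposition 4.7: for an orthogonal family satisfying the self-similarity relation,
the double Fourier series converges in `L²`, uniformly in `n`. -/
theorem stmt18 {Ω : Type*} [MeasurableSpace Ω] (P : Measure Ω) [IsProbabilityMeasure P]
    (p : ℕ) (hp : p.Prime) (H : ℝ) (hH : 0 < H)
    (A : ℕ → ℕ → Ω → ℂ) (hAmeas : ∀ m ℓ, Measurable (A m ℓ))
    (hL2 : ∀ m ℓ : ℕ, 1 ≤ m → 0 < ℓ → ℓ < p ^ m → ¬ p ∣ ℓ → MemLp (A m ℓ) 2 P)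
    (horth : ∀ m ℓ m' ℓ' : ℕ, 1 ≤ m → 0 < ℓ → ℓ < p ^ m → ¬ p ∣ ℓ →
      1 ≤ m' → 0 < ℓ' → ℓ' < p ^ m' → ¬ p ∣ ℓ' → (m, ℓ) ≠ (m', ℓ') →
      ∫ ω, A m ℓ ω * (starRingEnd ℂ) (A m' ℓ' ω) ∂P = 0)
    (hscale : EqDistFam P P
      (fun i : PIdx p => fun ω => (((p : ℝ) ^ (-H) : ℝ) : ℂ) * A i.1.1 i.1.2 ω)
      (fun i : PIdx p => fun ω =>
        ∑ t ∈ Finset.range p, A (i.1.1 + 1) (t * p ^ i.1.1 + i.1.2) ω)) :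
    ∀ ε : ℝ, 0 < ε → ∃ M₀ : ℕ, ∀ M N : ℕ, M₀ ≤ M → M ≤ N → ∀ n : ℕ,
      ∫ ω, ‖∑ m ∈ Finset.Icc M N,
          ∑ ℓ ∈ (Finset.Ioo 0 (p ^ m)).filter (fun ℓ => ¬ p ∣ ℓ),
            A m ℓ ω * eFun ((n : ℝ) * (ℓ : ℝ) / (p : ℝ) ^ m)‖ ^ 2 ∂P ≤ ε :=
  stmt18_general P p hp H hH A hAmeas hL2 horth hscale
end
end
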